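/- arXiv:1902.08132 — 2 statements merged into one kernel-verified Lean document; each statement's English description precedes it below -/
import Mathlib

section
/- Let V̄_f : X_f → ℝ be continuous on a closed set X_f ⊆ ℝⁿ, with min_x V̄_f(x) = 0 attained exactly on a nonempty set X̄ (i.e., V̄_f(x) = 0 iff x ∈ X̄, and V̄_f ≥ 0 on X_f). If X_f is compact, then there exists a K∞-function α such that V̄_f(x) ≤ α(‖x‖_{X̄}) for all x ∈ X_f. -/
def IsKInf (α : ℝ → ℝ) : Prop :=
  ContinuousOn α (Set.Ici 0) ∧ α 0 = 0 ∧ StrictMonoOn α (Set.Ici 0) ∧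
    ∀ M : ℝ, ∃ r : ℝ, 0 ≤ r ∧ M ≤ α r

/-!
With `d x = ‖x‖_{X̄}`, the functions `r ↦ V̄_f x * min 1 (|r| / d x)` are nondecreasing on
`r ≥ 0`, vanish at `r = 0` and take the value `V̄_f x` at `r = d x`. They are jointly continuous
in `(r, x)`, because `V̄_f` vanishes wherever `d` does and the second factor stays in `[0, 1]`.
So on the compact set `X_f` their pointwise maximum `w r` is continuous, nondecreasing and
zero at zero, and `α r = r + w r` is the required K∞-function.
-/

open Set Filter Topology

section RampSup

variable {X : Type*} {f g : X → ℝ}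

-- `|r|` rather than `r` keeps the ramp in `[0, 1]` for every real `r`, so the family is jointly
-- continuous on all of `ℝ × X`, as `IsCompact.continuous_sSup` requires.
noncomputable def rampSup (f g : X → ℝ) (r : ℝ) : ℝ :=
  ⨆ x, f x * min 1 (|r| / g x)

lemma rampSup_zero : rampSup f g 0 = 0 := by
  simp [rampSup]

lemma rampSup_nonneg (hf0 : ∀ x, 0 ≤ f x) (hg0 : ∀ x, 0 ≤ g x) (r : ℝ) :
    0 ≤ rampSup f g r :=
  Real.iSup_nonneg fun x =>
    mul_nonneg (hf0 x) (le_min zero_le_one (div_nonneg (abs_nonneg r) (hg0 x)))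

lemma monotoneOn_rampSup (hf0 : ∀ x, 0 ≤ f x) (hg0 : ∀ x, 0 ≤ g x)
    (hbdd : ∀ r, BddAbove (range fun x => f x * min 1 (|r| / g x))) :
    MonotoneOn (rampSup f g) (Ici 0) := fun a ha b _ hab =>
  ciSup_mono (hbdd b) fun x => by
    gcongr
    exacts [hf0 x, hg0 x]

lemma le_rampSup (hg0 : ∀ x, 0 ≤ g x) (hfg : ∀ x, g x = 0 → f x = 0)
    (hbdd : ∀ r, BddAbove (range fun x => f x * min 1 (|r| / g x))) (x : X) :
    f x ≤ rampSup f g (g x) := by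
  by_cases hx : g x = 0
  · rw [hfg x hx, hx, rampSup_zero]
  · calc f x = f x * min 1 (|g x| / g x) := by
          rw [abs_of_nonneg (hg0 x), div_self hx, min_self, mul_one]
      _ ≤ rampSup f g (g x) := le_ciSup (hbdd (g x)) x

variable [TopologicalSpace X]

lemma continuous_mul_min_one_abs_div (hf : Continuous f) (hg : Continuous g)
    (hg0 : ∀ x, 0 ≤ g x) (hfg : ∀ x, g x = 0 → f x = 0) :
    Continuous fun p : ℝ × X => f p.2 * min 1 (|p.1| / g p.2) := by
  refine continuous_iff_continuousAt.2 fun ⟨r, x⟩ => ?_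
  by_cases hx : g x = 0
  · have hbdd : ∀ p : ℝ × X, ‖min 1 (|p.1| / g p.2)‖ ≤ 1 := fun p => by
      rw [Real.norm_of_nonneg (le_min zero_le_one (div_nonneg (abs_nonneg _) (hg0 _)))]
      exact min_le_left _ _
    have hf0 : Tendsto (fun p : ℝ × X => f p.2) (𝓝 (r, x)) (𝓝 0) := by
      rw [← hfg x hx]
      exact (hf.tendsto x).comp (continuous_snd.tendsto (r, x))
    show Tendsto _ _ (𝓝 (f x * _))
    rw [hfg x hx, zero_mul]
    exact hf0.zero_mul_isBoundedUnder_le ⟨1, eventually_map.2 (Eventually.of_forall hbdd)⟩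
  · exact (hf.comp continuous_snd).continuousAt.mul (continuousAt_const.min
      ((continuous_abs.comp continuous_fst).continuousAt.div
        (hg.comp continuous_snd).continuousAt hx))

variable [CompactSpace X]

lemma bddAbove_range_mul_min_one_abs_div
    (hφ : Continuous fun p : ℝ × X => f p.2 * min 1 (|p.1| / g p.2)) (r : ℝ) :
    BddAbove (range fun x => f x * min 1 (|r| / g x)) :=
  (isCompact_range (hφ.comp (Continuous.prodMk_right r))).bddAbove

lemma continuous_rampSup (hφ : Continuous fun p : ℝ × X => f p.2 * min 1 (|p.1| / g p.2)) :
    Continuous (rampSup f g) := by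
  have h := isCompact_univ.continuous_sSup (f := fun r x => f x * min 1 (|r| / g x)) hφ
  simp only [image_univ] at h
  exact h

end RampSup

lemma ContinuousOn.eq_of_mem_closure {X Y : Type*} [TopologicalSpace X] [TopologicalSpace Y]
    [T2Space Y] {f : X → Y} {s t : Set X} {c : Y} (hf : ContinuousOn f s) (hts : t ⊆ s)
    (ht : EqOn f (fun _ => c) t) {x : X} (hxs : x ∈ s) (hxt : x ∈ closure t) : f x = c :=
  ht.of_subset_closure (hf.mono (insert_subset hxs hts)) continuousOn_const (subset_insert x t)
    (insert_subset hxt subset_closure) (mem_insert x t)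

theorem exists_isKInf_le_of_compactSpace {X : Type*} [TopologicalSpace X] [CompactSpace X]
    {f g : X → ℝ} (hf : Continuous f) (hg : Continuous g) (hf0 : ∀ x, 0 ≤ f x)
    (hg0 : ∀ x, 0 ≤ g x) (hfg : ∀ x, g x = 0 → f x = 0) :
    ∃ α : ℝ → ℝ, IsKInf α ∧ ∀ x, f x ≤ α (g x) := by
  have hφ := continuous_mul_min_one_abs_div hf hg hg0 hfg
  have hbdd := bddAbove_range_mul_min_one_abs_div hφ
  refine ⟨fun r => r + rampSup f g r,
    ⟨(continuous_id.add (continuous_rampSup hφ)).continuousOn, by simp [rampSup_zero], ?_,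
      fun M => ?_⟩, fun x => ?_⟩
  · exact fun a ha b hb hab =>
      add_lt_add_of_lt_of_le hab (monotoneOn_rampSup hf0 hg0 hbdd ha hb hab.le)
  · exact ⟨max M 0, le_max_right M 0,
      (le_max_left M 0).trans (le_add_of_nonneg_right (rampSup_nonneg hf0 hg0 _))⟩
  · exact (le_rampSup hg0 hfg hbdd x).trans (le_add_of_nonneg_left (hg0 x))

theorem stmt8_general {n : ℕ} (Xf Xbar : Set (EuclideanSpace ℝ (Fin n)))
    (hcomp : IsCompact Xf)
    (hne : Xbar.Nonempty) (hsub : Xbar ⊆ Xf)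
    (Vf : EuclideanSpace ℝ (Fin n) → ℝ)
    (hcont : ContinuousOn Vf Xf)
    (hnn : ∀ x ∈ Xf, 0 ≤ Vf x)
    (hzero : ∀ x ∈ Xf, Vf x = 0 ↔ x ∈ Xbar) :
    ∃ α : ℝ → ℝ, IsKInf α ∧ ∀ x ∈ Xf, Vf x ≤ α (Metric.infDist x Xbar) := by
  have : CompactSpace Xf := isCompact_iff_compactSpace.mp hcomp
  have hvanish (x : Xf) (hx : Metric.infDist (x : EuclideanSpace ℝ (Fin n)) Xbar = 0) :
      Vf x = 0 :=
    hcont.eq_of_mem_closure hsub (fun y hy => (hzero y (hsub hy)).2 hy) x.2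
      ((Metric.mem_closure_iff_infDist_zero hne).2 hx)
  obtain ⟨α, hα, hle⟩ := exists_isKInf_le_of_compactSpace hcont.domRestrict
    ((Metric.continuous_infDist_pt Xbar).comp continuous_subtype_val) (fun x => hnn x x.2)
    (fun _ => Metric.infDist_nonneg) hvanish
  exact ⟨α, hα, fun x hx => hle ⟨x, hx⟩⟩

/-- a continuous nonnegative function on a compact set `X_f`,
vanishing exactly on a nonempty set `X̄`, is upper bounded by a K∞-function of
the distance to `X̄`. -/
theorem stmt8 {n : ℕ} (Xf Xbar : Set (EuclideanSpace ℝ (Fin n)))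
    (hclosed : IsClosed Xf) (hcomp : IsCompact Xf)
    (hne : Xbar.Nonempty) (hsub : Xbar ⊆ Xf)
    (Vf : EuclideanSpace ℝ (Fin n) → ℝ)
    (hcont : ContinuousOn Vf Xf)
    (hnn : ∀ x ∈ Xf, 0 ≤ Vf x)
    (hzero : ∀ x ∈ Xf, Vf x = 0 ↔ x ∈ Xbar) :
    ∃ α : ℝ → ℝ, IsKInf α ∧ ∀ x ∈ Xf, Vf x ≤ α (Metric.infDist x Xbar) :=
  stmt8_general Xf Xbar hcomp hne hsub Vf hcont hnn hzero
end

section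
/- Consider the NCS stage cost ℓ(x,u) = x_pᵀQx_p + γ·u_cᵀRu_c + (1−γ)·u_sᵀRu_s with Q, R symmetric positive definite and γ ∈ {0,1}, input-hold dynamics u_s⁺ = γu_c + (1−γ)u_s, and storage function λ(x) = u_sᵀSu_s with R ≻ S ≻ 0 (S symmetric). Then the rotated cost L(x,u) = ℓ(x,u) + λ(x) − λ(x⁺) satisfies L(x,u) ≥ x_pᵀQx_p + u_sᵀSu_s for all x_p, u_s, u_c and γ ∈ {0,1}. -/
/-!
Since `γ ∈ {0, 1}`, the input cost `γ u_cᵀRu_c + (1 − γ) u_sᵀRu_s` of `ℓ` equals `u_s⁺ᵀRu_s⁺`, so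
`L(x, u) − x_pᵀQx_p − u_sᵀSu_s = u_s⁺ᵀ(R − S)u_s⁺ ≥ 0`.
-/

open Matrix

theorem Matrix.PosSemidef.dotProduct_mulVec_le_of_sub {n : Type*} [Fintype n]
    {R S : Matrix n n ℝ} (hRS : (R - S).PosSemidef) (v : n → ℝ) :
    v ⬝ᵥ S *ᵥ v ≤ v ⬝ᵥ R *ᵥ v := by
  have h := hRS.dotProduct_mulVec_nonneg v
  rwa [sub_mulVec, dotProduct_sub, sub_nonneg, star_trivial] at h

theorem mul_add_one_sub_mul_eq_of_eq_zero_or_one {V : Type*} [AddCommGroup V] [Module ℝ V]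
    (f : V → ℝ) (a b : V) {γ : ℝ} (hγ : γ = 0 ∨ γ = 1) :
    γ * f a + (1 - γ) * f b = f (γ • a + (1 - γ) • b) := by
  rcases hγ with rfl | rfl <;> simp

theorem stmt14_general {np mp : ℕ}
    (Q : Matrix (Fin np) (Fin np) ℝ) (R S : Matrix (Fin mp) (Fin mp) ℝ)
    (hRS : (R - S).PosDef)
    (xp : Fin np → ℝ) (us uc : Fin mp → ℝ) (γ : ℝ) (hγ : γ = 0 ∨ γ = 1) :
    xp ⬝ᵥ Q.mulVec xp + us ⬝ᵥ S.mulVec us ≤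
      (xp ⬝ᵥ Q.mulVec xp + γ * (uc ⬝ᵥ R.mulVec uc) + (1 - γ) * (us ⬝ᵥ R.mulVec us))
        + us ⬝ᵥ S.mulVec us
        - ((γ • uc + (1 - γ) • us) ⬝ᵥ S.mulVec (γ • uc + (1 - γ) • us)) := by
  rw [add_assoc (xp ⬝ᵥ Q *ᵥ xp),
    mul_add_one_sub_mul_eq_of_eq_zero_or_one (fun v => v ⬝ᵥ R *ᵥ v) uc us hγ]
  have := hRS.posSemidef.dotProduct_mulVec_le_of_sub (γ • uc + (1 - γ) • us)
  linarith

/-- the rotated NCS stage cost `L = ℓ + λ − λ∘f` with storage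
`λ(x) = u_sᵀSu_s`, `R ≻ S ≻ 0`, satisfies `L(x,u) ≥ x_pᵀQx_p + u_sᵀSu_s`. -/
theorem stmt14 {np mp : ℕ}
    (Q : Matrix (Fin np) (Fin np) ℝ) (R S : Matrix (Fin mp) (Fin mp) ℝ)
    (hQ : Q.PosDef) (hR : R.PosDef) (hS : S.PosDef) (hRS : (R - S).PosDef)
    (xp : Fin np → ℝ) (us uc : Fin mp → ℝ) (γ : ℝ) (hγ : γ = 0 ∨ γ = 1) :
    xp ⬝ᵥ Q.mulVec xp + us ⬝ᵥ S.mulVec us ≤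
      (xp ⬝ᵥ Q.mulVec xp + γ * (uc ⬝ᵥ R.mulVec uc) + (1 - γ) * (us ⬝ᵥ R.mulVec us))
        + us ⬝ᵥ S.mulVec us
        - ((γ • uc + (1 - γ) • us) ⬝ᵥ S.mulVec (γ • uc + (1 - γ) • us)) :=
  stmt14_general Q R S hRS xp us uc γ hγ
end
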